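/- Under hypotheses (H1)–(H4) and C > 0, the pre-Young identity holds: (C²/3)·‖s‖² + (C²/2)·‖p‖² + C·K + C·D + (1/2)·‖ζ‖² − (7/2)·‖ζ_p − φ_p‖² − (1/2)·‖φ‖² − (C/3)·⟪s, φ⟫ = −(C²/3)·⟪s₋, p⟫. -/

import Mathlib

/-!
Expanding `‖ζ‖² = ‖C p + (C/3) s + φ‖²` and using `ζp - φp = (C/3) s`, the `‖s‖²` terms cancel
(`1/3 + 1/18 = 7/18`) together with `‖φ‖²` and `⟪s, φ⟫`; what is left of the left-hand side is
exactly `C` times the sum of the left-hand sides of the flow and poromechanics equations.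
-/

open scoped RealInnerProductSpace

theorem norm_add_add_sq_real {H : Type*} [NormedAddCommGroup H] [InnerProductSpace ℝ H]
    (x y z : H) :
    ‖x + y + z‖ ^ 2 = ‖x‖ ^ 2 + ‖y‖ ^ 2 + ‖z‖ ^ 2 + 2 * ⟪x, y⟫ + 2 * ⟪x, z⟫ + 2 * ⟪y, z⟫ := by
  rw [norm_add_sq_real, norm_add_sq_real, inner_add_left]
  ring

theorem norm_smul_sq_real {H : Type*} [NormedAddCommGroup H] [InnerProductSpace ℝ H]
    (c : ℝ) (x : H) : ‖c • x‖ ^ 2 = c ^ 2 * ‖x‖ ^ 2 := by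
  rw [norm_smul, mul_pow, Real.norm_eq_abs, sq_abs]

theorem pre_young_identity_general
    {H : Type*} [NormedAddCommGroup H] [InnerProductSpace ℝ H]
    (C K D : ℝ) (p s sm φ ζ ζp φp : H)
    (H1 : C * ‖p‖ ^ 2 + K + ⟪φ, p⟫ = -(C / 3) * ⟪sm, p⟫)
    (H2 : D + (C / 3) * ⟪s, p⟫ = 0)
    (H3 : ζ = C • p + (C / 3) • s + φ)
    (H4 : ζp = (C / 3) • s + φp) :
    (C ^ 2 / 3) * ‖s‖ ^ 2 + (C ^ 2 / 2) * ‖p‖ ^ 2 + C * K + C * D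
      + (1 / 2) * ‖ζ‖ ^ 2 - (7 / 2) * ‖ζp - φp‖ ^ 2 - (1 / 2) * ‖φ‖ ^ 2
      - (C / 3) * ⟪s, φ⟫
      = -(C ^ 2 / 3) * ⟪sm, p⟫ := by
  subst H3 H4
  rw [add_sub_cancel_right, norm_add_add_sq_real, norm_smul_sq_real, norm_smul_sq_real]
  simp only [real_inner_smul_left, real_inner_smul_right, real_inner_comm φ p, real_inner_comm s p]
  linear_combination C * H1 + C * H2

/-- Pre-Young identity for the fixed stress split scheme. -/
theorem pre_young_identity
    {H : Type*} [NormedAddCommGroup H] [InnerProductSpace ℝ H]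
    (C K D : ℝ) (p s sm φ ζ ζp φp : H) (hC : 0 < C)
    (H1 : C * ‖p‖ ^ 2 + K + ⟪φ, p⟫ = -(C / 3) * ⟪sm, p⟫)
    (H2 : D + (C / 3) * ⟪s, p⟫ = 0)
    (H3 : ζ = C • p + (C / 3) • s + φ)
    (H4 : ζp = (C / 3) • s + φp) :
    (C ^ 2 / 3) * ‖s‖ ^ 2 + (C ^ 2 / 2) * ‖p‖ ^ 2 + C * K + C * D
      + (1 / 2) * ‖ζ‖ ^ 2 - (7 / 2) * ‖ζp - φp‖ ^ 2 - (1 / 2) * ‖φ‖ ^ 2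
      - (C / 3) * ⟪s, φ⟫
      = -(C ^ 2 / 3) * ⟪sm, p⟫ :=
  pre_young_identity_general C K D p s sm φ ζ ζp φp H1 H2 H3 H4
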